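/- arXiv:1202.6352 — 3 statements merged into one kernel-verified Lean document; each statement's English description precedes it below -/
import Mathlib

section
/- Let P be a quantifier-free (propositional) G△ formula. For every valuation v such that the value of P under v is strictly less than 1, and every real number c with 0 < c < 1, there exists a valuation v_c such that the value of P under v_c is at most c. -/
/-- The unit interval `[0,1]` is a complete lattice. -/
instance : Fact ((0:ℝ) ≤ 1) := ⟨zero_le_one⟩

/-- Gödel implication on `[0,1]`. -/
noncomputable def gimp (a b : unitInterval) : unitInterval := if a ≤ b then 1 else b

/-- Gödel negation on `[0,1]`. -/
noncomputable def gneg (a : unitInterval) : unitInterval := gimp a 0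

/-- The projection `△` on `[0,1]`. -/
noncomputable def gdelta (a : unitInterval) : unitInterval := if a = 1 then 1 else 0

/-- Propositional G△ formulas over a set `α` of atoms. -/
inductive GProp (α : Type) : Type where
  | bot : GProp α
  | top : GProp α
  | atom (a : α) : GProp α
  | and (A B : GProp α) : GProp α
  | or (A B : GProp α) : GProp α
  | imp (A B : GProp α) : GProp α
  | delta (A : GProp α) : GProp α

/-- The Gödel value of a propositional G△ formula under a valuation of the atoms. -/
noncomputable def GProp.val {α : Type} (v : α → unitInterval) : GProp α → unitInterval
  | .bot => 0
  | .top => 1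
  | .atom a => v a
  | .and A B => min (A.val v) (B.val v)
  | .or A B => max (A.val v) (B.val v)
  | .imp A B => gimp (A.val v) (B.val v)
  | .delta A => gdelta (A.val v)

/-!
Every strictly monotone self-map `f` of `[0,1]` fixing `0` and `1` commutes with the Gödel
truth functions, so valuating the atoms by `f ∘ v` yields the value `f (P.val v)`. Taking
`f x = c * x` for `x < 1` and `f 1 = 1` sends every value below `1` to at most `c`.
-/

open unitInterval

section StrictMono

variable {f : I → I}

lemma gimp_map_of_strictMono (hf : StrictMono f) (h1 : f 1 = 1) (a b : I) :
    gimp (f a) (f b) = f (gimp a b) := by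
  unfold gimp
  by_cases hab : a ≤ b
  · rw [if_pos (hf.monotone hab), if_pos hab, h1]
  · rw [if_neg (mt hf.le_iff_le.mp hab), if_neg hab]

lemma gdelta_map_of_strictMono (hf : StrictMono f) (h0 : f 0 = 0) (h1 : f 1 = 1) (a : I) :
    gdelta (f a) = f (gdelta a) := by
  have hone : f a = 1 ↔ a = 1 := ⟨fun h ↦ hf.injective (h.trans h1.symm), fun h ↦ h ▸ h1⟩
  unfold gdelta
  by_cases ha : a = 1
  · rw [if_pos (hone.mpr ha), if_pos ha, h1]
  · rw [if_neg (mt hone.mp ha), if_neg ha, h0]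

theorem GProp.val_comp_of_strictMono {α : Type} (hf : StrictMono f) (h0 : f 0 = 0)
    (h1 : f 1 = 1) (v : α → I) (P : GProp α) : P.val (f ∘ v) = f (P.val v) := by
  induction P with
  | bot => exact h0.symm
  | top => exact h1.symm
  | atom a => rfl
  | and A B ihA ihB => simp only [GProp.val, ihA, ihB, hf.monotone.map_min]
  | or A B ihA ihB => simp only [GProp.val, ihA, ihB, hf.monotone.map_max]
  | imp A B ihA ihB => simp only [GProp.val, ihA, ihB, gimp_map_of_strictMono hf h1]
  | delta A ihA => simp only [GProp.val, ihA, gdelta_map_of_strictMono hf h0 h1]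

end StrictMono

namespace unitInterval

noncomputable def shrink (c x : I) : I := if x = 1 then 1 else c * x

variable {c : I}

lemma shrink_one : shrink c 1 = 1 := if_pos rfl

lemma shrink_zero : shrink c 0 = 0 := by
  simp [shrink]

lemma shrink_of_ne_one {x : I} (hx : x ≠ 1) : shrink c x = c * x := if_neg hx

lemma shrink_le_of_ne_one {x : I} (hx : x ≠ 1) : shrink c x ≤ c := by
  rw [shrink_of_ne_one hx]
  exact mul_le_left

lemma shrink_strictMono (hc : 0 < c) : StrictMono (shrink c) := by
  intro a b hab
  rw [shrink_of_ne_one hab.ne_top]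
  by_cases hb : b = 1
  · rw [hb, shrink_one]
    exact mul_le_right.trans_lt (hb ▸ hab)
  · rw [shrink_of_ne_one hb]
    exact mul_lt_mul_of_pos_left hab hc

end unitInterval

/-- if a quantifier-free G△ formula takes a value `< 1` under some valuation,
then for every real `c` with `0 < c < 1` there is a valuation under which its value is
at most `c`. -/
theorem gval_lt_one_pushdown {α : Type} (P : GProp α) (v : α → unitInterval)
    (hv : GProp.val v P < 1) (c : ℝ) (hc0 : 0 < c) (hc1 : c < 1) :
    ∃ vc : α → unitInterval, (GProp.val vc P : ℝ) ≤ c := by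
  refine ⟨shrink ⟨c, hc0.le, hc1.le⟩ ∘ v, ?_⟩
  rw [GProp.val_comp_of_strictMono (shrink_strictMono hc0) shrink_zero shrink_one]
  exact shrink_le_of_ne_one hv.ne
end

section
/- Herbrand's theorem for prenex G△: let P(x̄) be a quantifier-free formula of first-order Gödel logic with △ with free variables x̄. If ∃x̄ P(x̄) is valid, then there exist finitely many tuples t̄₁, …, t̄ₙ of terms from the Herbrand universe U(P) such that the disjunction P(t̄₁) ∨ ⋯ ∨ P(t̄ₙ) is valid. -/
/-- A first-order signature: function symbols and predicate symbols with arities. -/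
structure Signature : Type 1 where
  Func : Type
  fArity : Func → ℕ
  Pred : Type
  pArity : Pred → ℕ

/-- Terms over a signature; variables are indexed by natural numbers. -/
inductive Term (S : Signature) : Type where
  | var (n : ℕ) : Term S
  | func (f : S.Func) (args : Fin (S.fArity f) → Term S) : Term S

namespace Term

variable {S : Signature}

/-- The set of variables occurring in a term. -/
def vars : Term S → Set ℕ
  | .var n => {n}
  | .func _ args => ⋃ i, (args i).vars

/-- The set of function symbols (including constants) occurring in a term. -/
def funcsIn : Term S → Set S.Func
  | .var _ => ∅
  | .func f args => insert f (⋃ i, (args i).funcsIn)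

/-- A term is ground if it contains no variables. -/
def isGround : Term S → Prop
  | .var _ => False
  | .func _ args => ∀ i, (args i).isGround

/-- Simultaneous substitution of terms for variables in a term. -/
def subst (σ : ℕ → Term S) : Term S → Term S
  | .var n => σ n
  | .func f args => .func f (fun i => (args i).subst σ)

end Term

/-- Formulas of first-order Gödel logic with `△`. -/
inductive Formula (S : Signature) : Type where
  | bot : Formula S
  | top : Formula S
  | atom (p : S.Pred) (args : Fin (S.pArity p) → Term S) : Formula S
  | and (A B : Formula S) : Formula S
  | or (A B : Formula S) : Formula S
  | imp (A B : Formula S) : Formula S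
  | delta (A : Formula S) : Formula S
  | all (x : ℕ) (A : Formula S) : Formula S
  | ex (x : ℕ) (A : Formula S) : Formula S

namespace Formula

variable {S : Signature}

/-- Gödel negation `¬A := A → ⊥`. -/
def neg (A : Formula S) : Formula S := A.imp .bot

/-- The set of free variables of a formula. -/
def freeVars : Formula S → Set ℕ
  | .bot => ∅
  | .top => ∅
  | .atom _ args => ⋃ i, (args i).vars
  | .and A B => A.freeVars ∪ B.freeVars
  | .or A B => A.freeVars ∪ B.freeVars
  | .imp A B => A.freeVars ∪ B.freeVars
  | .delta A => A.freeVars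
  | .all x A => A.freeVars \ {x}
  | .ex x A => A.freeVars \ {x}

/-- The set of function symbols occurring in a formula. -/
def funcsIn : Formula S → Set S.Func
  | .bot => ∅
  | .top => ∅
  | .atom _ args => ⋃ i, (args i).funcsIn
  | .and A B => A.funcsIn ∪ B.funcsIn
  | .or A B => A.funcsIn ∪ B.funcsIn
  | .imp A B => A.funcsIn ∪ B.funcsIn
  | .delta A => A.funcsIn
  | .all _ A => A.funcsIn
  | .ex _ A => A.funcsIn

/-- The set of predicate symbols occurring in a formula. -/
def predsIn : Formula S → Set S.Pred
  | .bot => ∅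
  | .top => ∅
  | .atom p _ => {p}
  | .and A B => A.predsIn ∪ B.predsIn
  | .or A B => A.predsIn ∪ B.predsIn
  | .imp A B => A.predsIn ∪ B.predsIn
  | .delta A => A.predsIn
  | .all _ A => A.predsIn
  | .ex _ A => A.predsIn

/-- A formula is quantifier free. -/
def isQF : Formula S → Prop
  | .bot => True
  | .top => True
  | .atom _ _ => True
  | .and A B => A.isQF ∧ B.isQF
  | .or A B => A.isQF ∧ B.isQF
  | .imp A B => A.isQF ∧ B.isQF
  | .delta A => A.isQF
  | .all _ _ => False
  | .ex _ _ => False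

/-- Simultaneous substitution of terms for the free variables of a formula
(bound variables are left untouched). -/
def subst (σ : ℕ → Term S) : Formula S → Formula S
  | .bot => .bot
  | .top => .top
  | .atom p args => .atom p (fun i => (args i).subst σ)
  | .and A B => .and (A.subst σ) (B.subst σ)
  | .or A B => .or (A.subst σ) (B.subst σ)
  | .imp A B => .imp (A.subst σ) (B.subst σ)
  | .delta A => .delta (A.subst σ)
  | .all x A => .all x (A.subst (Function.update σ x (.var x)))
  | .ex x A => .ex x (A.subst (Function.update σ x (.var x)))

/-- Substitution of a single term `t` for the variable `x`. -/
def subst1 (x : ℕ) (t : Term S) (A : Formula S) : Formula S :=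
  A.subst (fun n => if n = x then t else .var n)

end Formula

/-- An interpretation: a nonempty domain, interpretations of the function symbols,
and `[0,1]`-valued interpretations of the predicate symbols. -/
structure Interp (S : Signature) : Type 1 where
  D : Type
  dNe : Nonempty D
  fI : ∀ f : S.Func, (Fin (S.fArity f) → D) → D
  pI : ∀ p : S.Pred, (Fin (S.pArity p) → D) → unitInterval

attribute [instance] Interp.dNe

/-- Evaluation of a term in an interpretation under a variable assignment. -/
def Term.eval {S : Signature} (I : Interp S) (μ : ℕ → I.D) : Term S → I.D
  | .var n => μ n
  | .func f args => I.fI f (fun i => (args i).eval I μ)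

/-- The Gödel value `‖A‖ ∈ [0,1]` of a formula in an interpretation under a variable
assignment; `∀` is interpreted by the infimum and `∃` by the supremum. -/
noncomputable def Formula.val {S : Signature} (I : Interp S) (μ : ℕ → I.D) :
    Formula S → unitInterval
  | .bot => 0
  | .top => 1
  | .atom p args => I.pI p (fun i => (args i).eval I μ)
  | .and A B => min (A.val I μ) (B.val I μ)
  | .or A B => max (A.val I μ) (B.val I μ)
  | .imp A B => gimp (A.val I μ) (B.val I μ)
  | .delta A => gdelta (A.val I μ)
  | .all x A => ⨅ d : I.D, A.val I (Function.update μ x d)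
  | .ex x A => ⨆ d : I.D, A.val I (Function.update μ x d)

/-- A formula is valid if it takes value `1` in every interpretation, under every
variable assignment. -/
def valid {S : Signature} (A : Formula S) : Prop :=
  ∀ (I : Interp S) (μ : ℕ → I.D), A.val I μ = 1

/-- A formula is 1-satisfiable if it takes value `1` in some interpretation. -/
def sat1 {S : Signature} (A : Formula S) : Prop :=
  ∃ (I : Interp S) (μ : ℕ → I.D), A.val I μ = 1

/-- `exCloseList [x₁,…,xₙ] P = ∃x₁ … ∃xₙ P`. -/
def exCloseList {S : Signature} : List ℕ → Formula S → Formula S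
  | [], P => P
  | x :: xs, P => .ex x (exCloseList xs P)

/-- `allCloseList [x₁,…,xₙ] P = ∀x₁ … ∀xₙ P`. -/
def allCloseList {S : Signature} : List ℕ → Formula S → Formula S
  | [], P => P
  | x :: xs, P => .all x (allCloseList xs P)

/-- `buildPrenex [Q₁,…,Qₙ] i P = Q₁ zᵢ Q₂ z_{i+1} … Qₙ z_{i+n-1} P`, where `true`
codes `∀` and `false` codes `∃`; the bound variables are the indices `i, i+1, …`. -/
def buildPrenex {S : Signature} : List Bool → ℕ → Formula S → Formula S
  | [], _, P => P
  | b :: rest, i, P =>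
      if b then .all i (buildPrenex rest (i + 1) P)
      else .ex i (buildPrenex rest (i + 1) P)

/-- The positions (= variables) of the existential quantifiers in a prenex prefix. -/
def exPos (pref : List Bool) : List ℕ :=
  (List.range pref.length).filter (fun i => pref.getD i true = false)

/-- The positions (= variables) of the universal quantifiers in a prenex prefix. -/
def univPos (pref : List Bool) : List ℕ :=
  (List.range pref.length).filter (fun i => pref.getD i false = true)

/-- `bigOr A [B₁,…,Bₙ] = A ∨ B₁ ∨ … ∨ Bₙ`. -/
def bigOr {S : Signature} : Formula S → List (Formula S) → Formula S
  | A, [] => A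
  | A, B :: rest => .or A (bigOr B rest)

/-- `bigAnd A [B₁,…,Bₙ] = A ∧ B₁ ∧ … ∧ Bₙ`. -/
def bigAnd {S : Signature} : Formula S → List (Formula S) → Formula S
  | A, [] => A
  | A, B :: rest => .and A (bigAnd B rest)

/-! Suppose no finite disjunction of Herbrand instances of `P` is valid. Pulling a countermodel of
such a disjunction back to the Herbrand universe gives, for every finite set of ground tuples, a
valuation of the ground atoms under which none of these instances takes value `1`. Whether a
quantifier-free formula takes value `1` depends only on how its atom values are ordered among
themselves and relative to `0` and `1` (Gödel connectives preserve every order-compatible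
correspondence between truth values). An ultrafilter limit of these order types, realized in
`[0,1]` because the Herbrand universe is countable, therefore gives a single Herbrand model in
which no instance takes value `1`. Composing its atom values with an order embedding of `[0,1]`
that fixes `1` and maps `[0,1)` into `[0,1/2]` keeps this, and bounds every instance, hence also
`∃x̄ P(x̄)`, by `1/2`: a contradiction with validity. -/

open Filter Formula

variable {S : Signature}

/-! ### Quantifier-free formulas -/

abbrev Atom (S : Signature) : Type := Σ p : S.Pred, Fin (S.pArity p) → Term S

def Interp.atomVal (I : Interp S) (μ : ℕ → I.D) (a : Atom S) : unitInterval :=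
  I.pI a.1 fun i => (a.2 i).eval I μ

def Interp.withPred (I : Interp S) (pI : ∀ p : S.Pred, (Fin (S.pArity p) → I.D) → unitInterval) :
    Interp S :=
  { I with pI }

namespace Term

theorem eval_congr {I : Interp S} {μ₁ μ₂ : ℕ → I.D} {t : Term S}
    (h : ∀ n ∈ t.vars, μ₁ n = μ₂ n) : t.eval I μ₁ = t.eval I μ₂ := by
  induction t with
  | var n => exact h n rfl
  | func f args ih =>
    exact congrArg (I.fI f) (funext fun i => ih i fun n hn => h n (Set.mem_iUnion.2 ⟨i, hn⟩))

theorem eval_subst (I : Interp S) (μ : ℕ → I.D) (σ : ℕ → Term S) (t : Term S) :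
    (t.subst σ).eval I μ = t.eval I fun n => (σ n).eval I μ := by
  induction t with
  | var n => rfl
  | func f args ih => exact congrArg (I.fI f) (funext ih)

theorem eval_withPred (I : Interp S)
    (pI : ∀ p : S.Pred, (Fin (S.pArity p) → I.D) → unitInterval) (μ : ℕ → I.D) (t : Term S) :
    t.eval (I.withPred pI) μ = t.eval I μ := by
  induction t with
  | var n => rfl
  | func f args ih => exact congrArg (I.fI f) (funext ih)

theorem funcsIn_finite (t : Term S) : t.funcsIn.Finite := by
  induction t with
  | var n => exact Set.finite_empty
  | func f args ih => exact (Set.finite_iUnion ih).insert f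

end Term

namespace Formula

def atoms : Formula S → Set (Atom S)
  | .bot | .top => ∅
  | .atom p args => {⟨p, args⟩}
  | .and A B | .or A B | .imp A B => A.atoms ∪ B.atoms
  | .delta A | .all _ A | .ex _ A => A.atoms

theorem atoms_finite (A : Formula S) : A.atoms.Finite := by
  induction A with
  | bot | top => exact Set.finite_empty
  | atom p args => exact Set.finite_singleton _
  | and A B ihA ihB | or A B ihA ihB | imp A B ihA ihB => exact ihA.union ihB
  | delta A ih | all _ A ih | ex _ A ih => exact ih

theorem funcsIn_finite (A : Formula S) : A.funcsIn.Finite := by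
  induction A with
  | bot | top => exact Set.finite_empty
  | atom p args => exact Set.finite_iUnion fun i => (args i).funcsIn_finite
  | and A B ihA ihB | or A B ihA ihB | imp A B ihA ihB => exact ihA.union ihB
  | delta A ih | all _ A ih | ex _ A ih => exact ih

theorem vars_subset_freeVars_of_mem_atoms {A : Formula S} (hA : A.isQF) {a : Atom S}
    (ha : a ∈ A.atoms) (i : Fin (S.pArity a.1)) : (a.2 i).vars ⊆ A.freeVars := by
  induction A with
  | bot | top => exact ha.elim
  | atom p args => subst ha; exact Set.subset_iUnion (fun i => (args i).vars) i
  | and A B ihA ihB | or A B ihA ihB | imp A B ihA ihB =>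
    rcases ha with ha | ha
    · exact (ihA hA.1 ha).trans Set.subset_union_left
    · exact (ihB hA.2 ha).trans Set.subset_union_right
  | delta A ih => exact ih hA ha
  | all | ex => exact hA.elim

theorem funcsIn_subset_of_mem_atoms {A : Formula S} {a : Atom S} (ha : a ∈ A.atoms)
    (i : Fin (S.pArity a.1)) : (a.2 i).funcsIn ⊆ A.funcsIn := by
  induction A with
  | bot | top => exact ha.elim
  | atom p args => subst ha; exact Set.subset_iUnion (fun i => (args i).funcsIn) i
  | and A B ihA ihB | or A B ihA ihB | imp A B ihA ihB =>
    rcases ha with ha | ha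
    · exact (ihA ha).trans Set.subset_union_left
    · exact (ihB ha).trans Set.subset_union_right
  | delta A ih | all _ A ih | ex _ A ih => exact ih ha

end Formula

/-! ### Order-compatible correspondences of truth values -/

structure IsOrderCompat (R : unitInterval → unitInterval → Prop) : Prop where
  le_iff_le : ∀ ⦃x y x' y'⦄, R x y → R x' y' → (x ≤ x' ↔ y ≤ y')
  rel_zero : R 0 0
  rel_one : R 1 1

namespace IsOrderCompat

variable {R : unitInterval → unitInterval → Prop} {x y x' y' : unitInterval}

theorem eq_one_iff (hR : IsOrderCompat R) (h : R x y) : x = 1 ↔ y = 1 := by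
  rw [← unitInterval.le_one'.ge_iff_eq, ← unitInterval.le_one'.ge_iff_eq]
  exact hR.le_iff_le hR.rel_one h

theorem rel_min (hR : IsOrderCompat R) (h : R x y) (h' : R x' y') : R (min x x') (min y y') := by
  rcases le_total x x' with hx | hx
  · rwa [min_eq_left hx, min_eq_left ((hR.le_iff_le h h').1 hx)]
  · rwa [min_eq_right hx, min_eq_right ((hR.le_iff_le h' h).1 hx)]

theorem rel_max (hR : IsOrderCompat R) (h : R x y) (h' : R x' y') : R (max x x') (max y y') := by
  rcases le_total x x' with hx | hx
  · rwa [max_eq_right hx, max_eq_right ((hR.le_iff_le h h').1 hx)]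
  · rwa [max_eq_left hx, max_eq_left ((hR.le_iff_le h' h).1 hx)]

theorem rel_gimp (hR : IsOrderCompat R) (h : R x y) (h' : R x' y') : R (gimp x x') (gimp y y') := by
  by_cases hx : x ≤ x'
  · simpa [gimp, hx, (hR.le_iff_le h h').1 hx] using hR.rel_one
  · simpa [gimp, hx, mt (hR.le_iff_le h h').2 hx] using h'

theorem rel_gdelta (hR : IsOrderCompat R) (h : R x y) : R (gdelta x) (gdelta y) := by
  by_cases hx : x = 1
  · simpa [gdelta, hx, (hR.eq_one_iff h).1 hx] using hR.rel_one
  · simpa [gdelta, hx, mt (hR.eq_one_iff h).2 hx] using hR.rel_zero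

theorem val (hR : IsOrderCompat R)
    {I₁ I₂ : Interp S} {μ₁ : ℕ → I₁.D} {μ₂ : ℕ → I₂.D} {A : Formula S} (hA : A.isQF)
    (h : ∀ a ∈ A.atoms, R (I₁.atomVal μ₁ a) (I₂.atomVal μ₂ a)) :
    R (A.val I₁ μ₁) (A.val I₂ μ₂) := by
  induction A with
  | bot => exact hR.rel_zero
  | top => exact hR.rel_one
  | atom p args => exact h _ rfl
  | and A B ihA ihB =>
    exact hR.rel_min (ihA hA.1 fun a ha => h a (.inl ha)) (ihB hA.2 fun a ha => h a (.inr ha))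
  | or A B ihA ihB =>
    exact hR.rel_max (ihA hA.1 fun a ha => h a (.inl ha)) (ihB hA.2 fun a ha => h a (.inr ha))
  | imp A B ihA ihB =>
    exact hR.rel_gimp (ihA hA.1 fun a ha => h a (.inl ha)) (ihB hA.2 fun a ha => h a (.inr ha))
  | delta A ih => exact hR.rel_gdelta (ih hA h)
  | all | ex => exact hA.elim

end IsOrderCompat

theorem isOrderCompat_eq : IsOrderCompat (· = ·) :=
  ⟨by rintro _ _ _ _ rfl rfl; rfl, rfl, rfl⟩

theorem StrictMono.isOrderCompat {h : unitInterval → unitInterval} (hh : StrictMono h)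
    (h0 : h 0 = 0) (h1 : h 1 = 1) : IsOrderCompat fun x y => h x = y :=
  ⟨by rintro _ _ _ _ rfl rfl; exact hh.le_iff_le.symm, h0, h1⟩

theorem Formula.val_congr {I : Interp S} {μ₁ μ₂ : ℕ → I.D} {A : Formula S} (hA : A.isQF)
    (h : ∀ n ∈ A.freeVars, μ₁ n = μ₂ n) : A.val I μ₁ = A.val I μ₂ :=
  isOrderCompat_eq.val hA fun _ ha => congrArg (I.pI _) <| funext fun i =>
    Term.eval_congr fun n hn => h n (vars_subset_freeVars_of_mem_atoms hA ha i hn)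

theorem Formula.val_subst (I : Interp S) (μ : ℕ → I.D) (σ : ℕ → Term S) {A : Formula S}
    (hA : A.isQF) :
    (A.subst σ).val I μ = A.val I fun n => (σ n).eval I μ := by
  induction A with
  | bot | top => rfl
  | atom p args => exact congrArg (I.pI p) (funext fun i => Term.eval_subst I μ σ (args i))
  | and A B ihA ihB | or A B ihA ihB | imp A B ihA ihB =>
    simp only [Formula.subst, Formula.val, ihA hA.1, ihB hA.2]
  | delta A ih => simp only [Formula.subst, Formula.val, ih hA]
  | all | ex => exact hA.elim

theorem Formula.val_withPred_comp {h : unitInterval → unitInterval} (hh : StrictMono h)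
    (h0 : h 0 = 0) (h1 : h 1 = 1) (I : Interp S) (μ : ℕ → I.D) {A : Formula S} (hA : A.isQF) :
    A.val (I.withPred fun p args => h (I.pI p args)) μ = h (A.val I μ) :=
  ((hh.isOrderCompat h0 h1).val hA fun a _ => by
    simp only [Interp.atomVal, Term.eval_withPred]; rfl).symm

noncomputable def halve (x : unitInterval) : unitInterval :=
  if x = 1 then 1 else ⟨x / 2, by constructor <;> linarith [x.2.1, x.2.2]⟩

theorem halve_le_of_ne_one {x : unitInterval} (hx : x ≠ 1) : (halve x : ℝ) ≤ 1 / 2 := by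
  simp only [halve, if_neg hx]
  linarith [unitInterval.le_one x]

theorem strictMono_halve : StrictMono halve := by
  intro x y hxy
  have hx : x ≠ 1 := (hxy.trans_le unitInterval.le_one').ne
  by_cases hy : y = 1
  · refine lt_of_le_of_lt (b := ⟨1 / 2, by norm_num, by norm_num⟩) (halve_le_of_ne_one hx) ?_
    simp only [halve, if_pos hy]
    exact Subtype.mk_lt_mk.2 (by norm_num)
  · simp only [halve, if_neg hx, if_neg hy]
    exact Subtype.mk_lt_mk.2 (by linarith [Subtype.coe_lt_coe.2 hxy])

theorem halve_zero : halve 0 = 0 := by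
  simp [halve]

theorem halve_one : halve 1 = 1 := if_pos rfl

theorem val_exCloseList_le {I : Interp S} {A : Formula S} {c : unitInterval}
    (h : ∀ μ, A.val I μ ≤ c) (xs : List ℕ) (μ : ℕ → I.D) : (exCloseList xs A).val I μ ≤ c := by
  induction xs generalizing μ with
  | nil => exact h μ
  | cons x xs ih => exact iSup_le fun _ => ih _

theorem le_val_bigOr (I : Interp S) (μ : ℕ → I.D) {A : Formula S} {l : List (Formula S)} :
    ∀ B ∈ A :: l, B.val I μ ≤ (bigOr A l).val I μ := by
  induction l generalizing A with
  | nil => simp [bigOr]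
  | cons C l ih =>
    rintro B (_ | ⟨_, hB⟩)
    · exact le_max_left _ _
    · exact (ih B hB).trans (le_max_right _ _)

/-- Values `≠ 1` may have supremum `1`; composing all atom values with `halve` keeps them `≠ 1`
and bounds them by `1/2`. -/
theorem not_valid_exCloseList_of_val_ne_one {A : Formula S} (hA : A.isQF) (I : Interp S)
    (h : ∀ μ, A.val I μ ≠ 1) (xs : List ℕ) : ¬ valid (exCloseList xs A) := by
  intro hvalid
  let J := I.withPred fun p args => halve (I.pI p args)
  have hJ (μ : ℕ → J.D) : A.val J μ ≤ ⟨1 / 2, by norm_num, by norm_num⟩ := by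
    rw [val_withPred_comp strictMono_halve halve_zero halve_one I μ hA]
    exact halve_le_of_ne_one (h μ)
  have := val_exCloseList_le hJ xs fun _ => Classical.arbitrary _
  rw [hvalid] at this
  exact absurd (Subtype.coe_le_coe.2 this) (by norm_num)

/-! ### Compactness for order types -/

section OrderType

variable {X : Type*}

/- An order type of a valuation `v` on `s` is recorded together with the truth values `0` and `1`,
as the order of `extendZeroOne v` on `extendedPoints s`. -/

def extendZeroOne (v : X → unitInterval) : X ⊕ Fin 2 → unitInterval :=
  Sum.elim v ![0, 1]

def extendedPoints (s : Set X) : Set (X ⊕ Fin 2) :=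
  Sum.inl '' s ∪ Set.range Sum.inr

def SameOrderOn (s : Set X) (v w : X → unitInterval) : Prop :=
  ∀ y ∈ extendedPoints s, ∀ y' ∈ extendedPoints s,
    (extendZeroOne v y ≤ extendZeroOne v y' ↔ extendZeroOne w y ≤ extendZeroOne w y')

theorem SameOrderOn.comp {X' : Type*} {g : X' → X} {s : Set X'} {v w : X → unitInterval}
    (h : SameOrderOn (g '' s) v w) : SameOrderOn s (v ∘ g) (w ∘ g) := by
  have hext (u : X → unitInterval) : extendZeroOne (u ∘ g) = extendZeroOne u ∘ Sum.map g id :=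
    (Sum.elim_comp_map ..).symm
  have hmaps : Set.MapsTo (Sum.map g id) (extendedPoints s) (extendedPoints (g '' s)) := by
    rintro _ (⟨x, hx, rfl⟩ | ⟨j, rfl⟩)
    exacts [.inl ⟨g x, ⟨x, hx, rfl⟩, rfl⟩, .inr ⟨j, rfl⟩]
  intro y hy y' hy'
  simpa only [hext, Function.comp_apply] using h _ (hmaps hy) _ (hmaps hy')

theorem SameOrderOn.isOrderCompat {s : Set X} {v w : X → unitInterval} (h : SameOrderOn s v w) :
    IsOrderCompat fun x y => ∃ z ∈ extendedPoints s,
      extendZeroOne v z = x ∧ extendZeroOne w z = y where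
  le_iff_le := by
    rintro _ _ _ _ ⟨z, hz, rfl, rfl⟩ ⟨z', hz', rfl, rfl⟩
    exact h z hz z' hz'
  rel_zero := ⟨.inr 0, .inr ⟨0, rfl⟩, rfl, rfl⟩
  rel_one := ⟨.inr 1, .inr ⟨1, rfl⟩, rfl, rfl⟩

end OrderType

theorem Formula.val_eq_one_iff_of_sameOrderOn {I₁ I₂ : Interp S} {μ₁ : ℕ → I₁.D}
    {μ₂ : ℕ → I₂.D} {A : Formula S} (hA : A.isQF)
    (h : SameOrderOn A.atoms (I₁.atomVal μ₁) (I₂.atomVal μ₂)) :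
    A.val I₁ μ₁ = 1 ↔ A.val I₂ μ₂ = 1 :=
  h.isOrderCompat.eq_one_iff <|
    h.isOrderCompat.val hA fun a ha => ⟨.inl a, .inl ⟨a, ha, rfl⟩, rfl, rfl⟩

theorem exists_unitInterval_realization {Y L : Type*} [Countable Y] [LinearOrder L] (V : Y → L)
    {a b : Y} (hab : V a < V b) (hV : ∀ y, V a ≤ V y ∧ V y ≤ V b) :
    ∃ φ : Y → unitInterval, (∀ y y', φ y ≤ φ y' ↔ V y ≤ V y') ∧ φ a = 0 ∧ φ b = 1 := by
  have : Countable (Set.range V) := (Set.countable_range V).to_subtype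
  obtain ⟨e⟩ := Order.embedding_from_countable_to_dense (Set.range V) ℚ
  let r (y : Y) : ℝ := e ⟨V y, y, rfl⟩
  have hr (y y' : Y) : r y ≤ r y' ↔ V y ≤ V y' := by
    simp only [r, Rat.cast_le, e.le_iff_le]; rfl
  have hpos : 0 < r b - r a := sub_pos.2 (lt_of_not_ge (mt (hr b a).1 hab.not_ge))
  let f (y : Y) : ℝ := (r y - r a) / (r b - r a)
  have hf (y y' : Y) : f y ≤ f y' ↔ V y ≤ V y' := by
    rw [div_le_div_iff_of_pos_right hpos, sub_le_sub_iff_right, hr]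
  refine ⟨fun y => ⟨f y, ?_, ?_⟩, hf, ?_, ?_⟩
  · exact div_nonneg (sub_nonneg.2 ((hr a y).2 (hV y).1)) hpos.le
  · exact div_le_one_of_le₀ (sub_le_sub_right ((hr y b).2 (hV y).2) _) hpos.le
  · ext; simp [f]
  · ext; simp [f, div_self hpos.ne']

theorem Ultrafilter.eventually_iff_of_iff_eventually {α : Type*} {U : Ultrafilter α} {p : Prop}
    {q : α → Prop} (h : p ↔ ∀ᶠ x in U, q x) : ∀ᶠ x in U, (p ↔ q x) := by
  by_cases hp : p
  · exact (h.1 hp).mono fun x hx => iff_of_true hp hx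
  · exact (Ultrafilter.eventually_not.2 (mt h.2 hp)).mono fun x hx => iff_of_false hp hx

/-- The limit of the order types along an ultrafilter can be realized in `[0,1]` because only
countably many atoms are involved. -/
theorem exists_forall_of_forall_finset {X ι : Type*} [Countable ι]
    (C : ι → (X → unitInterval) → Prop) (T : ι → Set X) (hT : ∀ i, (T i).Finite)
    (hC : ∀ i v w, SameOrderOn (T i) v w → C i v → C i w)
    (h : ∀ F : Finset ι, ∃ v, ∀ i ∈ F, C i v) : ∃ v, ∀ i, C i v := by
  classical
  choose vF hvF using h
  let U : Ultrafilter (Finset ι) := .of atTop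
  let V (y : X ⊕ Fin 2) : Germ (U : Filter (Finset ι)) unitInterval :=
    ↑fun F => extendZeroOne (vF F) y
  let Y := extendedPoints (⋃ i, T i)
  have : Countable Y := (((Set.countable_iUnion fun i => (hT i).countable).image _).union
    (Set.countable_range _)).to_subtype
  have hVY (y : Y) : V (.inr 0) ≤ V y ∧ V y ≤ V (.inr 1) :=
    ⟨Germ.coe_le.2 (.of_forall fun _ => unitInterval.nonneg'),
      Germ.coe_le.2 (.of_forall fun _ => unitInterval.le_one')⟩
  obtain ⟨φ, hφ, hφ0, hφ1⟩ := exists_unitInterval_realization (fun y : Y => V y)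
    (a := ⟨.inr 0, .inr ⟨0, rfl⟩⟩) (b := ⟨.inr 1, .inr ⟨1, rfl⟩⟩)
    (Germ.coe_lt.2 (.of_forall fun _ => zero_lt_one)) hVY
  let v (x : X) : unitInterval := if hx : Sum.inl x ∈ Y then φ ⟨_, hx⟩ else 0
  have hv : ∀ y (hy : y ∈ Y), extendZeroOne v y = φ ⟨y, hy⟩ := by
    rintro (x | j) hy
    · simp [extendZeroOne, v, hy]
    · fin_cases j
      exacts [hφ0.symm, hφ1.symm]
  refine ⟨v, fun i => ?_⟩
  have hTY : extendedPoints (T i) ⊆ Y :=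
    Set.union_subset_union_left _ (Set.image_mono (Set.subset_iUnion T i))
  have hfin : (extendedPoints (T i)).Finite :=
    ((hT i).image _).union (Set.finite_range _)
  have hlim : ∀ᶠ F in (U : Filter (Finset ι)), SameOrderOn (T i) (vF F) v := by
    refine hfin.eventually_all.2 fun y hy => hfin.eventually_all.2 fun y' hy' => ?_
    rw [hv y (hTY hy), hv y' (hTY hy'), hφ]
    exact (Ultrafilter.eventually_iff_of_iff_eventually Germ.coe_le).mono fun _ => Iff.symm
  have hmem : ∀ᶠ F in (U : Filter (Finset ι)), i ∈ F :=
    Eventually.mono (Ultrafilter.of_le _ (eventually_ge_atTop {i})) fun F hF =>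
      hF (Finset.mem_singleton_self i)
  obtain ⟨F, hiF, hF⟩ := (hmem.and hlim).exists
  exact hC i _ _ hF (hvF F i hiF)

/-! ### Herbrand models -/

def Term.code (c : S.Func → ℕ) : Term S → ℕ
  | .var n => Nat.pair 0 n
  | .func f args => Nat.pair (c f + 1) (Encodable.encode (List.ofFn fun i => (args i).code c))

theorem Term.code_injOn {Φ : Set S.Func} {c : S.Func → ℕ} (hc : Set.InjOn c Φ) :
    Set.InjOn (Term.code c) {t | t.funcsIn ⊆ Φ} := by
  intro t ht s hs hts
  induction t generalizing s with
  | var n =>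
    cases s <;> simp_all [Term.code]
  | func f args ih =>
    cases s with
    | var m => simp [Term.code] at hts
    | func g args' =>
      simp only [Term.code, Nat.pair_eq_pair, add_left_inj] at hts
      obtain rfl := hc (ht (Set.mem_insert _ _)) (hs (Set.mem_insert _ _)) hts.1
      have hcodes := List.ofFn_injective (Encodable.encode_injective hts.2)
      congr 1
      funext i
      exact ih i (fun _ hx => ht (Set.mem_insert_of_mem _ (Set.mem_iUnion.2 ⟨i, hx⟩)))
        (fun _ hx => hs (Set.mem_insert_of_mem _ (Set.mem_iUnion.2 ⟨i, hx⟩))) (congrFun hcodes i)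

def HerbrandUniverse (Φ : Set S.Func) : Type :=
  {t : Term S // t.isGround ∧ t.funcsIn ⊆ Φ}

abbrev GroundAtom (Φ : Set S.Func) : Type :=
  Σ p : S.Pred, Fin (S.pArity p) → HerbrandUniverse Φ

section Herbrand

variable {Φ : Set S.Func}

theorem countable_herbrandUniverse (hΦ : Φ.Finite) : Countable (HerbrandUniverse Φ) := by
  obtain ⟨c, hc⟩ := Set.countable_iff_exists_injOn.1 hΦ.countable
  exact Function.Injective.countable (f := fun t : HerbrandUniverse Φ => t.1.code c)
    fun t s hts => Subtype.ext (Term.code_injOn hc t.2.2 s.2.2 hts)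

def HerbrandUniverse.const (c : S.Func) (hc : S.fArity c = 0) (hcΦ : c ∈ Φ) :
    HerbrandUniverse Φ :=
  ⟨.func c fun i => (i.cast hc).elim0, fun i => (i.cast hc).elim0,
    Set.insert_subset hcΦ (Set.iUnion_subset fun i => (i.cast hc).elim0)⟩

open Classical in
noncomputable def herbrandFun (d : HerbrandUniverse Φ) (f : S.Func)
    (args : Fin (S.fArity f) → HerbrandUniverse Φ) : HerbrandUniverse Φ :=
  if hf : f ∈ Φ then
    ⟨.func f fun i => (args i).1, fun i => (args i).2.1,
      Set.insert_subset hf (Set.iUnion_subset fun i => (args i).2.2)⟩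
  else d

theorem herbrandFun_val_of_mem (d : HerbrandUniverse Φ) {f : S.Func} (hf : f ∈ Φ)
    (args : Fin (S.fArity f) → HerbrandUniverse Φ) :
    (herbrandFun d f args).1 = .func f fun i => (args i).1 := by
  simp [herbrandFun, hf]

noncomputable abbrev herbrand (d : HerbrandUniverse Φ) : Interp S where
  D := HerbrandUniverse Φ
  dNe := ⟨d⟩
  fI := herbrandFun d
  pI _ _ := 0

noncomputable def herbrandModel (d : HerbrandUniverse Φ) (v : GroundAtom Φ → unitInterval) :
    Interp S :=
  (herbrand d).withPred fun p args => v ⟨p, args⟩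

noncomputable def groundInst (d : HerbrandUniverse Φ) (ν : ℕ → HerbrandUniverse Φ) (a : Atom S) :
    GroundAtom Φ :=
  ⟨a.1, fun i => (a.2 i).eval (herbrand d) ν⟩

theorem atomVal_herbrandModel (d : HerbrandUniverse Φ) (v : GroundAtom Φ → unitInterval)
    (ν : ℕ → HerbrandUniverse Φ) : (herbrandModel d v).atomVal ν = v ∘ groundInst d ν := by
  funext a
  exact congrArg (fun args => v ⟨a.1, args⟩) <| funext fun i =>
    Term.eval_withPred (herbrand d) _ ν (a.2 i)

theorem herbrandModel_val_eq_one_iff (d : HerbrandUniverse Φ) {v w : GroundAtom Φ → unitInterval}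
    {ν : ℕ → HerbrandUniverse Φ} {A : Formula S} (hA : A.isQF)
    (h : SameOrderOn (groundInst d ν '' A.atoms) v w) :
    A.val (herbrandModel d v) ν = 1 ↔ A.val (herbrandModel d w) ν = 1 :=
  val_eq_one_iff_of_sameOrderOn hA (by simpa only [atomVal_herbrandModel] using h.comp)

theorem eval_herbrand (d : HerbrandUniverse Φ) (ν : ℕ → HerbrandUniverse Φ) (I : Interp S)
    (μ : ℕ → I.D) {t : Term S} (ht : t.funcsIn ⊆ Φ) :
    (t.eval (herbrand d) ν).1.eval I μ = t.eval I fun n => (ν n).1.eval I μ := by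
  induction t with
  | var n => rfl
  | func f args ih =>
    have hf : f ∈ Φ := ht (Set.mem_insert _ _)
    change (herbrandFun d f _).1.eval I μ = _
    rw [herbrandFun_val_of_mem d hf]
    exact congrArg (I.fI f) <| funext fun i =>
      ih i fun _ hx => ht (Set.mem_insert_of_mem _ (Set.mem_iUnion.2 ⟨i, hx⟩))

def pullback (I : Interp S) (μ : ℕ → I.D) (g : GroundAtom Φ) : unitInterval :=
  I.pI g.1 fun i => (g.2 i).1.eval I μ

theorem val_herbrandModel_pullback (d : HerbrandUniverse Φ) (I : Interp S) (μ : ℕ → I.D)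
    (ν : ℕ → HerbrandUniverse Φ) {A : Formula S} (hA : A.isQF) (hAΦ : A.funcsIn ⊆ Φ) :
    A.val (herbrandModel d (pullback I μ)) ν = A.val I fun n => (ν n).1.eval I μ :=
  isOrderCompat_eq.val hA fun a ha => by
    rw [atomVal_herbrandModel]
    exact congrArg (I.pI a.1) <| funext fun i =>
      eval_herbrand d ν I μ ((funcsIn_subset_of_mem_atoms ha i).trans hAΦ)

variable {k : ℕ}

def tupleSubst (ts : Fin k → Term S) (m : ℕ) : Term S :=
  if h : m < k then ts ⟨m, h⟩ else .var m

def tupleAssign (d : HerbrandUniverse Φ) (tb : Fin k → HerbrandUniverse Φ) (m : ℕ) :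
    HerbrandUniverse Φ :=
  if h : m < k then tb ⟨m, h⟩ else d

theorem val_subst_tupleSubst (d : HerbrandUniverse Φ) (I : Interp S) (μ : ℕ → I.D)
    {A : Formula S} (hA : A.isQF) (hvars : ∀ v ∈ A.freeVars, v < k) (hAΦ : A.funcsIn ⊆ Φ)
    (tb : Fin k → HerbrandUniverse Φ) :
    (A.subst (tupleSubst fun j => (tb j).1)).val I μ =
      A.val (herbrandModel d (pullback I μ)) (tupleAssign d tb) := by
  rw [val_subst I μ _ hA, val_herbrandModel_pullback d I μ _ hA hAΦ]
  exact val_congr hA fun n hn => by simp [tupleSubst, tupleAssign, hvars n hn]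

theorem exists_countermodel_of_not_valid_bigOr (d : HerbrandUniverse Φ) {A : Formula S}
    (hA : A.isQF) (hvars : ∀ v ∈ A.freeVars, v < k) (hAΦ : A.funcsIn ⊆ Φ) {n : ℕ}
    (tb : Fin (n + 1) → Fin k → HerbrandUniverse Φ)
    (h : ¬ valid (bigOr (A.subst (tupleSubst fun j => (tb 0 j).1))
      (List.ofFn fun i : Fin n => A.subst (tupleSubst fun j => (tb i.succ j).1)))) :
    ∃ v, ∀ i, A.val (herbrandModel d v) (tupleAssign d (tb i)) ≠ 1 := by
  simp only [valid, not_forall] at h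
  obtain ⟨I, μ, hI⟩ := h
  refine ⟨pullback I μ, fun i hi => hI (le_antisymm unitInterval.le_one' ?_)⟩
  rw [← hi, ← val_subst_tupleSubst d I μ hA hvars hAΦ]
  refine le_val_bigOr I μ _ ?_
  rw [← List.ofFn_succ (f := fun i => A.subst (tupleSubst fun j => (tb i j).1))]
  exact List.mem_ofFn.2 ⟨i, rfl⟩

theorem not_valid_exCloseList_of_countermodels [Countable (HerbrandUniverse Φ)]
    (d : HerbrandUniverse Φ) {A : Formula S} (hA : A.isQF) (hvars : ∀ v ∈ A.freeVars, v < k)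
    (h : ∀ F : Finset (Fin k → HerbrandUniverse Φ),
      ∃ v, ∀ tb ∈ F, A.val (herbrandModel d v) (tupleAssign d tb) ≠ 1)
    (xs : List ℕ) : ¬ valid (exCloseList xs A) := by
  obtain ⟨v, hv⟩ := exists_forall_of_forall_finset
    (fun tb v => A.val (herbrandModel d v) (tupleAssign d tb) ≠ 1)
    (fun tb => groundInst d (tupleAssign d tb) '' A.atoms) (fun _ => A.atoms_finite.image _)
    (fun _ _ _ hvw => (herbrandModel_val_eq_one_iff d hA hvw).not.1) h
  refine not_valid_exCloseList_of_val_ne_one hA (herbrandModel d v) (fun ν => ?_) xs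
  rw [val_congr hA (μ₂ := tupleAssign d fun j : Fin k => ν j) fun n hn => by
    simp [tupleAssign, hvars n hn]]
  exact hv _

end Herbrand

theorem herbrand_prenex_Gdelta_general (S : Signature) (P : Formula S) (hQF : P.isQF)
    (k : ℕ) (hvars : ∀ v ∈ P.freeVars, v < k)
    (c₀ f₀ : S.Func) (hc₀ : S.fArity c₀ = 0)
    (hval : valid (exCloseList (List.range k) P)) :
    ∃ (n : ℕ) (ts : Fin (n + 1) → Fin k → Term S),
      (∀ i j, (ts i j).isGround ∧
        (ts i j).funcsIn ⊆ insert c₀ (insert f₀ P.funcsIn)) ∧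
      valid (bigOr
        (P.subst (fun m => if h : m < k then ts 0 ⟨m, h⟩ else .var m))
        (List.ofFn (fun i : Fin n =>
          P.subst (fun m => if h : m < k then ts i.succ ⟨m, h⟩ else .var m)))) := by
  set Φ := insert c₀ (insert f₀ P.funcsIn)
  have hPΦ : P.funcsIn ⊆ Φ := (Set.subset_insert _ _).trans (Set.subset_insert _ _)
  have : Countable (HerbrandUniverse Φ) :=
    countable_herbrandUniverse ((P.funcsIn_finite.insert f₀).insert c₀)
  let d : HerbrandUniverse Φ := .const c₀ hc₀ (Set.mem_insert _ _)
  by_contra hne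
  refine not_valid_exCloseList_of_countermodels d hQF hvars (fun F => ?_) _ hval
  -- `F` may be empty: a dummy tuple in front gives the `n + 1` tuples the statement asks for
  let tb : Fin (F.card + 1) → Fin k → HerbrandUniverse Φ :=
    Fin.cons (fun _ => d) fun i => F.equivFin.symm i
  obtain ⟨v, hv⟩ := exists_countermodel_of_not_valid_bigOr d hQF hvars hPΦ tb
    fun hvalid => hne ⟨_, fun i j => (tb i j).1, fun i j => (tb i j).2, hvalid⟩
  exact ⟨v, fun t ht => by simpa [tb] using hv (F.equivFin ⟨t, ht⟩).succ⟩

/-- Herbrand's theorem for prenex G△: let `P` be quantifier free with free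
variables among `x₀,…,x_{k-1}`, and let the Herbrand universe `U(P)` consist of the ground
terms built from the function symbols (and constants) occurring in `P`, together with a
constant `c₀` and a function symbol `f₀` of positive arity (added to prevent `U(P)` from
being empty or finite).  If `∃x̄ P(x̄)` is valid, then there are finitely many tuples
`t̄₁,…,t̄ₙ` (`n ≥ 1`) of terms of `U(P)` such that `P(t̄₁) ∨ ⋯ ∨ P(t̄ₙ)` is valid. -/
theorem herbrand_prenex_Gdelta (S : Signature) (P : Formula S) (hQF : P.isQF)
    (k : ℕ) (hvars : ∀ v ∈ P.freeVars, v < k)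
    (c₀ f₀ : S.Func) (hc₀ : S.fArity c₀ = 0) (hf₀ : 0 < S.fArity f₀)
    (hval : valid (exCloseList (List.range k) P)) :
    ∃ (n : ℕ) (ts : Fin (n + 1) → Fin k → Term S),
      (∀ i j, (ts i j).isGround ∧
        (ts i j).funcsIn ⊆ insert c₀ (insert f₀ P.funcsIn)) ∧
      valid (bigOr
        (P.subst (fun m => if h : m < k then ts 0 ⟨m, h⟩ else .var m))
        (List.ofFn (fun i : Fin n =>
          P.subst (fun m => if h : m < k then ts i.succ ⟨m, h⟩ else .var m)))) :=
  herbrand_prenex_Gdelta_general S P hQF k hvars c₀ f₀ hc₀ hval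
end

section
/- SAT-Skolemization, step 1: let A₁, …, Aₘ be closed prenex formulas of first-order Gödel logic with △ and let q be a fresh monadic predicate symbol. Then A₁ ∧ ⋯ ∧ Aₘ is 1-satisfiable if and only if ∃x q(x) ∧ sk_q(A₁) ∧ ⋯ ∧ sk_q(Aₘ) is 1-satisfiable. -/
/-- The SAT-Skolem substitution (Definition of `Ψ_q`): each existentially quantified
variable `i` is replaced by the Skolem term `f i (zᵢ, z₀, …, z_{i-1})` (the guard
variable `zᵢ` followed by the free variables at that point); universal variables are
kept. -/
def skSubstSatQ {S : Signature} (pref : List Bool) (skf : ℕ → S.Func) : ℕ → Term S :=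
  fun i =>
    if pref.getD i true = false then
      Term.func (skf i)
        (fun j => Term.var (if (j : ℕ) = 0 then i else (j : ℕ) - 1))
    else Term.var i

/-- The atom `q(t)` for a monadic predicate symbol `q`. -/
def qAtom {S : Signature} (q : S.Pred) (t : Term S) : Formula S :=
  .atom q (fun _ => t)

/-- `guards q [i₁,…,iₙ] B = q(z_{i₁}) → (q(z_{i₂}) → … (q(z_{iₙ}) → B))`:
the guards `q(x) → ·` produced by `Ψ_q` at the existential positions. -/
def guards {S : Signature} (q : S.Pred) : List ℕ → Formula S → Formula S
  | [], B => B
  | i :: xs, B => .imp (qAtom q (.var i)) (guards q xs B)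

/-- The SAT-Skolem form `sk_q(A) = ∀x̄ △(Ψ_q(A)⁻)` of the prenex formula with prefix
`pref` and quantifier-free matrix `P`. -/
def skq {S : Signature} (q : S.Pred) (skf : ℕ → S.Func) (pref : List Bool)
    (P : Formula S) : Formula S :=
  allCloseList (List.range pref.length)
    (.delta (guards q (exPos pref) (P.subst (skSubstSatQ pref skf))))

/-- The formula `∃x q(x)`. -/
def exQ {S : Signature} (q : S.Pred) : Formula S := .ex 0 (qAtom q (.var 0))

/-
Backward: if `⨆ q = 1` and every `sk_q(Aᵢ)` holds, then so does `Aᵢ`. By downward induction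
along the prefix, the value of the tail starting at position `j`, under the assignment given by
the Skolem terms, dominates the minimum of the guards `q(zₑ)` met before `j`; at an existential
position the new guard `q(e)` may be taken arbitrarily close to `1`, because
`min a (⨆ₑ q e) = ⨆ₑ min a (q e)`.

Forward: expand a model of the `Aᵢ` to the domain `D × ℕ` with `q(d, k) = k / (k + 1)`, so that
`∃x q(x)` has value `1` while every guard is `< 1`. An existential formula of value `1` need not
have a witness of value `1`, but it has one above any value `< 1`. So the Skolem functions can
choose the witnesses position by position, keeping the value of the remaining tail at `1` or
strictly above the minimum of the guards met so far; at the end of the prefix this is the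
Skolemized matrix.
-/

section

variable {S : Signature}

theorem gimp_eq_one_iff {a b : unitInterval} : gimp a b = 1 ↔ a ≤ b := by
  unfold gimp
  split_ifs with h
  · simpa using h
  · exact ⟨fun hb => (h (hb ▸ unitInterval.le_one')).elim, fun hab => (h hab).elim⟩

theorem one_gimp (b : unitInterval) : gimp 1 b = b := by
  unfold gimp
  split_ifs with h
  · exact (le_antisymm unitInterval.le_one' h).symm
  · rfl

theorem gimp_gimp (a b c : unitInterval) : gimp a (gimp b c) = gimp (min a b) c := by
  unfold gimp
  split_ifs <;> first | rfl | (rw [min_le_iff] at *; tauto)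

theorem gdelta_eq_one_iff {a : unitInterval} : gdelta a = 1 ↔ a = 1 := by
  unfold gdelta
  split_ifs with h
  · simpa using h
  · simp [h, (zero_lt_one' unitInterval).ne]

theorem Term.eval_congr_s11 (I : Interp S) {μ μ' : ℕ → I.D} :
    ∀ t : Term S, (∀ v ∈ t.vars, μ v = μ' v) → t.eval I μ = t.eval I μ'
  | .var n, h => h n rfl
  | .func f args, h => congrArg (I.fI f) <| funext fun i =>
      eval_congr_s11 I (args i) fun v hv => h v (Set.mem_iUnion.2 ⟨i, hv⟩)

theorem Term.eval_subst_s11 (I : Interp S) (μ : ℕ → I.D) (σ : ℕ → Term S) :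
    ∀ t : Term S, (t.subst σ).eval I μ = t.eval I (fun n => (σ n).eval I μ)
  | .var _ => rfl
  | .func f args => congrArg (I.fI f) <| funext fun i => eval_subst_s11 I μ σ (args i)

namespace Formula

theorem val_and_eq_one_iff {I : Interp S} {μ : ℕ → I.D} {A B : Formula S} :
    (A.and B).val I μ = 1 ↔ A.val I μ = 1 ∧ B.val I μ = 1 :=
  inf_eq_top_iff

theorem val_all_eq_one_iff {I : Interp S} {μ : ℕ → I.D} {x : ℕ} {A : Formula S} :
    (A.all x).val I μ = 1 ↔ ∀ d, A.val I (Function.update μ x d) = 1 :=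
  iInf_eq_top

theorem val_congr_s11 (I : Interp S) {μ μ' : ℕ → I.D} (A : Formula S)
    (h : ∀ v ∈ A.freeVars, μ v = μ' v) : A.val I μ = A.val I μ' := by
  induction A generalizing μ μ' with
  | bot | top => rfl
  | atom p args => exact congrArg (I.pI p) <| funext fun i =>
      (args i).eval_congr_s11 I fun v hv => h v (Set.mem_iUnion.2 ⟨i, hv⟩)
  | and A B ihA ihB | or A B ihA ihB | imp A B ihA ihB =>
      simp only [val]
      rw [ihA fun v hv => h v (Or.inl hv), ihB fun v hv => h v (Or.inr hv)]
  | delta A ih => simp only [val]; rw [ih h]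
  | all x A ih | ex x A ih =>
      simp only [val]
      congr 1
      funext d
      refine ih fun v hv => ?_
      by_cases hvx : v = x
      · subst hvx; simp
      · simpa only [Function.update_of_ne hvx] using h v ⟨hv, hvx⟩

theorem val_subst_s11 (I : Interp S) (μ : ℕ → I.D) (σ : ℕ → Term S) {A : Formula S}
    (hA : A.isQF) : (A.subst σ).val I μ = A.val I (fun n => (σ n).eval I μ) := by
  induction A with
  | bot | top => rfl
  | atom p args => exact congrArg (I.pI p) <| funext fun i => (args i).eval_subst_s11 I μ σ
  | and A B ihA ihB | or A B ihA ihB | imp A B ihA ihB =>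
      simp only [subst, val, ihA hA.1, ihB hA.2]
  | delta A ih => simp only [subst, val, ih hA]
  | all | ex => exact hA.elim

end Formula

section Closures

variable {I : Interp S} {μ : ℕ → I.D}

theorem val_bigAnd_eq_one_iff (A : Formula S) (L : List (Formula S)) :
    (bigAnd A L).val I μ = 1 ↔ ∀ B ∈ A :: L, B.val I μ = 1 := by
  induction L generalizing A with
  | nil => simp [bigAnd]
  | cons B L ih =>
      rw [bigAnd, Formula.val_and_eq_one_iff, ih, List.forall_mem_cons (l := _ :: L)]

theorem val_bigAnd_ofFn_eq_one_iff {m : ℕ} (A : Fin (m + 1) → Formula S) :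
    (bigAnd (A 0) (List.ofFn fun i : Fin m => A i.succ)).val I μ = 1 ↔
      ∀ i, (A i).val I μ = 1 := by
  rw [val_bigAnd_eq_one_iff, ← List.ofFn_succ, List.forall_mem_ofFn_iff]

theorem val_allCloseList_eq_one_iff (L : List ℕ) (B : Formula S) :
    (allCloseList L B).val I μ = 1 ↔
      ∀ μ' : ℕ → I.D, (∀ i ∉ L, μ' i = μ i) → B.val I μ' = 1 := by
  induction L generalizing μ with
  | nil =>
      refine ⟨fun h μ' hμ' => ?_, fun h => h μ fun _ _ => rfl⟩
      rwa [funext fun i => hμ' i List.not_mem_nil]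
  | cons x L ih =>
      simp only [allCloseList, Formula.val_all_eq_one_iff, ih]
      refine ⟨fun h μ' hμ' => h (μ' x) μ' fun i hi => ?_,
        fun h d μ' hμ' => h μ' fun i hi => ?_⟩
      · by_cases hix : i = x
        · simp [hix]
        · rw [Function.update_of_ne hix, hμ' i (by simp [hix, hi])]
      · simp only [List.mem_cons, not_or] at hi
        rw [hμ' i hi.2, Function.update_of_ne hi.1]

end Closures

def Interp.monadicVal (I : Interp S) (q : S.Pred) (d : I.D) : unitInterval :=
  I.pI q fun _ => d

def guardInf {D : Type} (Q : D → unitInterval) (z : ℕ → D) (L : List ℕ) : unitInterval :=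
  (L.map fun i => Q (z i)).foldr min 1

theorem guardInf_append {D : Type} (Q : D → unitInterval) (z : ℕ → D) (L₁ L₂ : List ℕ) :
    guardInf Q z (L₁ ++ L₂) = min (guardInf Q z L₁) (guardInf Q z L₂) := by
  induction L₁ with
  | nil => exact (min_eq_right unitInterval.le_one').symm
  | cons i L ih =>
      simp only [guardInf, List.cons_append, List.map_cons, List.foldr_cons] at ih ⊢
      rw [ih, min_assoc]

theorem guardInf_congr {D : Type} (Q : D → unitInterval) {z z' : ℕ → D} {L : List ℕ}
    (h : ∀ i ∈ L, z i = z' i) : guardInf Q z L = guardInf Q z' L :=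
  congrArg _ (List.map_congr_left fun i hi => by rw [h i hi])

theorem val_guards (I : Interp S) (μ : ℕ → I.D) (q : S.Pred) (L : List ℕ) (B : Formula S) :
    (guards q L B).val I μ = gimp (guardInf (I.monadicVal q) μ L) (B.val I μ) := by
  induction L with
  | nil => exact (one_gimp _).symm
  | cons i L ih => exact (congrArg _ ih).trans (gimp_gimp _ _ _)

def exPosBelow (pref : List Bool) (n : ℕ) : List ℕ :=
  (List.range n).filter fun i => pref.getD i true = false

theorem exPosBelow_length (pref : List Bool) : exPosBelow pref pref.length = exPos pref := rfl

theorem guardInf_exPosBelow_succ {D : Type} (Q : D → unitInterval) (z : ℕ → D)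
    (pref : List Bool) (n : ℕ) : guardInf Q z (exPosBelow pref (n + 1)) =
      if pref.getD n true then guardInf Q z (exPosBelow pref n)
      else min (guardInf Q z (exPosBelow pref n)) (Q (z n)) := by
  rw [exPosBelow, List.range_succ, List.filter_append, List.filter_singleton, guardInf_append]
  cases pref.getD n true
  · simp [guardInf, exPosBelow, min_eq_left unitInterval.le_one']
  · simpa [guardInf, exPosBelow] using unitInterval.le_one'

theorem lt_length_of_getD_eq_false {pref : List Bool} {n : ℕ} (h : pref.getD n true = false) :
    n < pref.length := by
  by_contra hn
  rw [List.getD_eq_default pref true (by omega)] at h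
  exact Bool.noConfusion h

theorem mem_exPos {pref : List Bool} {n : ℕ} : n ∈ exPos pref ↔ pref.getD n true = false := by
  simpa [exPos] using lt_length_of_getD_eq_false

def prenexTail (pref : List Bool) (P : Formula S) (j : ℕ) : Formula S :=
  buildPrenex (pref.drop j) j P

section Prenex

variable {pref : List Bool} {P : Formula S}

theorem prenexTail_zero : prenexTail pref P 0 = buildPrenex pref 0 P := rfl

theorem prenexTail_length : prenexTail pref P pref.length = P := by
  simp [prenexTail, buildPrenex]

theorem prenexTail_eq_ite {n : ℕ} (hn : n < pref.length) :
    prenexTail pref P n = if pref.getD n true then .all n (prenexTail pref P (n + 1))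
      else .ex n (prenexTail pref P (n + 1)) := by
  rw [prenexTail, List.drop_eq_getElem_cons hn, List.getD_eq_getElem pref true hn]
  rfl

theorem freeVars_buildPrenex {l : List Bool} {i v : ℕ} (hv : v ∈ (buildPrenex l i P).freeVars) :
    v ∈ P.freeVars ∧ (v < i ∨ i + l.length ≤ v) := by
  induction l generalizing i with
  | nil => exact ⟨hv, by simpa using Nat.lt_or_ge v i⟩
  | cons b l ih =>
      simp only [buildPrenex] at hv
      split at hv <;>
      · obtain ⟨hv, hvi⟩ := hv
        obtain ⟨h1, h2⟩ := ih hv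
        simp only [Set.mem_singleton_iff] at hvi
        exact ⟨h1, by simp only [List.length_cons]; omega⟩

theorem val_prenexTail_congr {I : Interp S} (hclosed : ∀ v ∈ P.freeVars, v < pref.length)
    {j : ℕ} {μ μ' : ℕ → I.D} (h : ∀ i < j, μ i = μ' i) :
    (prenexTail pref P j).val I μ = (prenexTail pref P j).val I μ' :=
  Formula.val_congr_s11 I _ fun v hv => by
    obtain ⟨hvP, hvj⟩ := freeVars_buildPrenex hv
    have := hclosed v hvP
    simp only [List.length_drop] at hvj
    exact h v (by omega)

theorem val_buildPrenex_congr {I : Interp S} (hclosed : ∀ v ∈ P.freeVars, v < pref.length)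
    (μ μ' : ℕ → I.D) : (buildPrenex pref 0 P).val I μ = (buildPrenex pref 0 P).val I μ' :=
  val_prenexTail_congr (j := 0) hclosed fun i hi => absurd hi (Nat.not_lt_zero i)

end Prenex

def skAssign (I : Interp S) (pref : List Bool) (skf : ℕ → S.Func) (z : ℕ → I.D) (n : ℕ) :
    I.D :=
  (skSubstSatQ pref skf n).eval I z

/-- `△(Ψ_q(A)⁻)` has value `1` under every assignment. -/
def SkolemMatrixHolds (I : Interp S) (q : S.Pred) (skf : ℕ → S.Func) (pref : List Bool)
    (P : Formula S) : Prop :=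
  ∀ z, guardInf (I.monadicVal q) z (exPos pref) ≤ P.val I (skAssign I pref skf z)

section Skolem

variable {I : Interp S} {q : S.Pred} {skf : ℕ → S.Func} {pref : List Bool} {P : Formula S}

theorem skAssign_of_getD_eq_true {z : ℕ → I.D} {n : ℕ} (hb : pref.getD n true = true) :
    skAssign I pref skf z n = z n := by
  simp only [skAssign, skSubstSatQ, hb, Bool.true_eq_false, ite_false]
  rfl

theorem le_of_mem_vars_skSubstSatQ (harity : ∀ j ∈ exPos pref, S.fArity (skf j) = j + 1)
    {n v : ℕ} (hv : v ∈ (skSubstSatQ pref skf n).vars) : v ≤ n := by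
  unfold skSubstSatQ at hv
  split_ifs at hv with hb
  · obtain ⟨j, hj⟩ := Set.mem_iUnion.1 hv
    have := harity n (mem_exPos.2 hb)
    have := j.isLt
    simp only [Term.vars, Set.mem_singleton_iff] at hj
    split_ifs at hj <;> omega
  · exact (Set.mem_singleton_iff.1 hv).le

theorem skAssign_congr (harity : ∀ j ∈ exPos pref, S.fArity (skf j) = j + 1)
    {z z' : ℕ → I.D} {n : ℕ} (h : ∀ i ≤ n, z i = z' i) :
    skAssign I pref skf z n = skAssign I pref skf z' n :=
  Term.eval_congr_s11 I _ fun _ hv => h _ (le_of_mem_vars_skSubstSatQ harity hv)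

theorem val_skq_eq_one_iff {μ : ℕ → I.D} (hQF : P.isQF)
    (hclosed : ∀ v ∈ P.freeVars, v < pref.length)
    (harity : ∀ j ∈ exPos pref, S.fArity (skf j) = j + 1) :
    (skq q skf pref P).val I μ = 1 ↔ SkolemMatrixHolds I q skf pref P := by
  have hmatrix z : (Formula.delta (guards q (exPos pref) (P.subst (skSubstSatQ pref skf)))).val
      I z = 1 ↔ guardInf (I.monadicVal q) z (exPos pref) ≤ P.val I (skAssign I pref skf z) := by
    change gdelta _ = 1 ↔ _
    rw [gdelta_eq_one_iff, val_guards, gimp_eq_one_iff, Formula.val_subst_s11 I z _ hQF]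
    rfl
  simp only [skq, val_allCloseList_eq_one_iff, hmatrix]
  refine ⟨fun h z => ?_, fun h z _ => h z⟩
  let z' i := if i < pref.length then z i else μ i
  have hz : ∀ i < pref.length, z i = z' i := fun i hi => (if_pos hi).symm
  convert h z' (fun i hi => if_neg (by simpa using hi)) using 1
  · exact guardInf_congr _ fun i hi => hz i (lt_length_of_getD_eq_false (mem_exPos.1 hi))
  · exact Formula.val_congr_s11 I P fun v hv =>
      skAssign_congr harity fun i hi => hz i (by have := hclosed v hv; omega)

theorem guardInf_le_val_prenexTail (hsup : ⨆ d, I.monadicVal q d = 1)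
    (hclosed : ∀ v ∈ P.freeVars, v < pref.length)
    (harity : ∀ j ∈ exPos pref, S.fArity (skf j) = j + 1)
    (hsk : SkolemMatrixHolds I q skf pref P) {j : ℕ} (hj : j ≤ pref.length) (z : ℕ → I.D) :
    guardInf (I.monadicVal q) z (exPosBelow pref j) ≤
      (prenexTail pref P j).val I (skAssign I pref skf z) := by
  induction hj using Nat.decreasingInduction generalizing z with
  | self => simpa only [exPosBelow_length, prenexTail_length] using hsk z
  | of_succ j hj ih =>
    set Q := I.monadicVal q
    set B := prenexTail pref P (j + 1)
    have hupdate e : B.val I (Function.update (skAssign I pref skf z) j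
        (skAssign I pref skf (Function.update z j e) j)) =
          B.val I (skAssign I pref skf (Function.update z j e)) :=
      val_prenexTail_congr hclosed fun i hi => by
        rcases eq_or_ne i j with rfl | hij
        · exact Function.update_self ..
        · rw [Function.update_of_ne hij]
          exact skAssign_congr harity fun k hk => (Function.update_of_ne (by omega) ..).symm
    have hguards e : guardInf Q (Function.update z j e) (exPosBelow pref j) =
        guardInf Q z (exPosBelow pref j) :=
      guardInf_congr Q fun i hi =>
        Function.update_of_ne (List.mem_range.1 (List.mem_of_mem_filter hi)).ne ..
    have hstep e := ih (Function.update z j e)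
    simp only [guardInf_exPosBelow_succ, Function.update_self, hguards] at hstep
    rw [prenexTail_eq_ite hj]
    cases hb : pref.getD j true
    · simp only [hb, Bool.false_eq_true, ite_false] at hstep ⊢
      calc guardInf Q z (exPosBelow pref j)
          = guardInf Q z (exPosBelow pref j) ⊓ ⨆ e, Q e := by
            rw [hsup]; exact (inf_top_eq _).symm
        _ = ⨆ e, min (guardInf Q z (exPosBelow pref j)) (Q e) := inf_iSup_eq _ _
        _ ≤ _ := iSup_le fun e => le_iSup_of_le _ ((hstep e).trans (hupdate e).ge)
    · simp only [hb, ite_true] at hstep ⊢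
      refine le_iInf fun e => (hstep e).trans_eq ?_
      rw [← hupdate e, skAssign_of_getD_eq_true hb, Function.update_self]

theorem val_buildPrenex_eq_one_of_skolemMatrixHolds (hsup : ⨆ d, I.monadicVal q d = 1)
    (hclosed : ∀ v ∈ P.freeVars, v < pref.length)
    (harity : ∀ j ∈ exPos pref, S.fArity (skf j) = j + 1)
    (hsk : SkolemMatrixHolds I q skf pref P) (μ : ℕ → I.D) :
    (buildPrenex pref 0 P).val I μ = 1 := by
  have h := guardInf_le_val_prenexTail hsup hclosed harity hsk (Nat.zero_le _) μ
  rw [prenexTail_zero, val_buildPrenex_congr hclosed _ μ] at h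
  exact le_antisymm unitInterval.le_one' h

end Skolem

noncomputable def guardValue {α : Type} (x : α × ℕ) : unitInterval :=
  ⟨x.2 / (x.2 + 1), unitInterval.div_mem x.2.cast_nonneg (by positivity) (by linarith)⟩

theorem guardValue_lt_one {α : Type} (x : α × ℕ) : guardValue x < 1 := by
  rw [← unitInterval.coe_lt_one]
  exact (div_lt_one (by positivity)).2 (lt_add_one _)

theorem iSup_guardValue {α : Type} [Nonempty α] : ⨆ x : α × ℕ, guardValue x = 1 := by
  refine le_antisymm unitInterval.le_one' (le_of_forall_lt fun c hc => lt_iSup_iff.2 ?_)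
  obtain ⟨n, hn⟩ := ((tendsto_natCast_div_add_atTop (1 : ℝ)).eventually_const_lt
    (unitInterval.coe_lt_one.2 hc)).exists
  exact ⟨(Classical.arbitrary α, n), hn⟩

noncomputable def witnessAssign (pref : List Bool) (P : Formula S) (I : Interp S)
    (z : ℕ → I.D × ℕ) : ℕ → ℕ → I.D
  | 0 => fun _ => Classical.arbitrary I.D
  | n + 1 => Function.update (witnessAssign pref P I z n) n <|
      if pref.getD n true then (z n).1
      else Classical.epsilon fun d => guardInf guardValue z (exPosBelow pref (n + 1)) <
        (prenexTail pref P (n + 1)).val I (Function.update (witnessAssign pref P I z n) n d)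

section Witness

variable {I : Interp S} {pref : List Bool} {P : Formula S}

theorem witnessAssign_congr {z z' : ℕ → I.D × ℕ} {n : ℕ} (h : ∀ i < n, z i = z' i) :
    witnessAssign pref P I z n = witnessAssign pref P I z' n := by
  induction n with
  | zero => rfl
  | succ n ih =>
    have hguards : guardInf guardValue z (exPosBelow pref (n + 1)) =
        guardInf guardValue z' (exPosBelow pref (n + 1)) :=
      guardInf_congr _ fun i hi => h i (List.mem_range.1 (List.mem_of_mem_filter hi))
    simp only [witnessAssign, ih fun i hi => h i (by omega), h n (by omega), hguards]

theorem witnessAssign_of_lt (z : ℕ → I.D × ℕ) {i n : ℕ} (hi : i < n) :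
    witnessAssign pref P I z n i = witnessAssign pref P I z (i + 1) i := by
  induction n, hi using Nat.le_induction with
  | base => rfl
  | succ n hn ih => rw [witnessAssign, Function.update_of_ne (by omega), ih]

theorem witnessAssign_invariant (hclosed : ∀ v ∈ P.freeVars, v < pref.length)
    {μ₀ : ℕ → I.D} (hA : (buildPrenex pref 0 P).val I μ₀ = 1) (z : ℕ → I.D × ℕ) {n : ℕ}
    (hn : n ≤ pref.length) :
    (prenexTail pref P n).val I (witnessAssign pref P I z n) = 1 ∨
      guardInf guardValue z (exPosBelow pref n) <
        (prenexTail pref P n).val I (witnessAssign pref P I z n) := by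
  induction n with
  | zero =>
    left
    rwa [prenexTail_zero, val_buildPrenex_congr hclosed _ μ₀]
  | succ n ih =>
    have ih := ih (by omega)
    rw [prenexTail_eq_ite (by omega)] at ih
    rw [witnessAssign, guardInf_exPosBelow_succ]
    set w := witnessAssign pref P I z n
    set B := prenexTail pref P (n + 1)
    cases hb : pref.getD n true
    · simp only [hb, Bool.false_eq_true, ite_false] at ih ⊢
      right
      refine Classical.epsilon_spec (p := fun d => _ < B.val I (Function.update w n d)) ?_
      refine lt_iSup_iff.1 ?_
      rcases ih with h | h
      · exact (min_le_right _ _).trans_lt ((guardValue_lt_one (z n)).trans_eq h.symm)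
      · exact (min_le_left _ _).trans_lt h
    · simp only [hb, ite_true] at ih ⊢
      have hle : (Formula.all n B).val I w ≤ B.val I (Function.update w n (z n).1) :=
        iInf_le _ _
      rcases ih with h | h
      · exact .inl (le_antisymm unitInterval.le_one' (h ▸ hle))
      · exact .inr (h.trans_le hle)

theorem guardInf_le_val_witnessAssign (hclosed : ∀ v ∈ P.freeVars, v < pref.length)
    {μ₀ : ℕ → I.D} (hA : (buildPrenex pref 0 P).val I μ₀ = 1) (z : ℕ → I.D × ℕ) :
    guardInf guardValue z (exPos pref) ≤ P.val I (witnessAssign pref P I z pref.length) := by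
  have h := witnessAssign_invariant hclosed hA z le_rfl
  rw [prenexTail_length, exPosBelow_length] at h
  rcases h with h | h
  · exact h ▸ unitInterval.le_one'
  · exact h.le

end Witness

open Classical in
@[reducible] noncomputable def Interp.guardExpansion (I : Interp S) (q : S.Pred)
    (hq : S.pArity q = 1) (F : S.Func → Option ((ℕ → I.D × ℕ) → I.D)) : Interp S where
  D := I.D × ℕ
  dNe := inferInstance
  fI g args := match F g with
    | some f =>
      (f fun t => if ht : t < S.fArity g then args ⟨t, ht⟩ else Classical.arbitrary _, 0)
    | none => (I.fI g fun i => (args i).1, 0)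
  pI p args :=
    if hp : p = q then guardValue (args (Fin.cast ((congrArg S.pArity hp).trans hq).symm 0))
    else I.pI p fun i => (args i).1

namespace Interp.guardExpansion

variable {I : Interp S} {q : S.Pred} {hq : S.pArity q = 1}
  {F : S.Func → Option ((ℕ → I.D × ℕ) → I.D)}

theorem monadicVal_eq : (I.guardExpansion q hq F).monadicVal q = guardValue :=
  funext fun _ => dif_pos rfl

theorem eval_func_of_eq_some {g : S.Func} {f : (ℕ → I.D × ℕ) → I.D} (hg : F g = some f)
    (args : Fin (S.fArity g) → Term S) (z : ℕ → I.D × ℕ) :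
    (Term.func g args).eval (I.guardExpansion q hq F) z =
      (f fun t => if ht : t < S.fArity g then (args ⟨t, ht⟩).eval (I.guardExpansion q hq F) z
        else Classical.arbitrary _, 0) := by
  simp only [Term.eval, guardExpansion, hg]

theorem fst_eval (z : ℕ → I.D × ℕ) :
    ∀ t : Term S, (∀ g ∈ t.funcsIn, F g = none) →
      (t.eval (I.guardExpansion q hq F) z).1 = t.eval I fun i => (z i).1
  | .var _, _ => rfl
  | .func g args, h => by
    simp only [Term.eval, guardExpansion, h g (Set.mem_insert g _)]
    exact congrArg (I.fI g) <| funext fun i => fst_eval z (args i) fun g' hg' =>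
      h g' (Set.mem_insert_of_mem g (Set.mem_iUnion.2 ⟨i, hg'⟩))

theorem val_eq {A : Formula S} (hA : A.isQF) (hqA : q ∉ A.predsIn)
    (hF : ∀ g ∈ A.funcsIn, F g = none) (z : ℕ → I.D × ℕ) :
    A.val (I.guardExpansion q hq F) z = A.val I fun i => (z i).1 := by
  induction A with
  | bot | top => rfl
  | atom p args =>
    have hp : p ≠ q := fun h => hqA (h ▸ Set.mem_singleton p)
    simp only [Formula.val, guardExpansion, dif_neg hp]
    exact congrArg (I.pI p) <| funext fun i =>
      fst_eval (hq := hq) z (args i) fun g hg => hF g (Set.mem_iUnion.2 ⟨i, hg⟩)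
  | and A B ihA ihB | or A B ihA ihB | imp A B ihA ihB =>
    simp only [Formula.val, ihA hA.1 (fun h => hqA (Or.inl h)) (fun g hg => hF g (Or.inl hg)),
      ihB hA.2 (fun h => hqA (Or.inr h)) (fun g hg => hF g (Or.inr hg))]
  | delta A ih => simp only [Formula.val, ih hA hqA hF]
  | all | ex => exact hA.elim

end Interp.guardExpansion

/-- The Skolem term at position `n` has the arguments `(zₙ, z₀, …, zₙ₋₁)`. -/
noncomputable def skolemFun (pref : List Bool) (P : Formula S) (I : Interp S) (n : ℕ)
    (a : ℕ → I.D × ℕ) : I.D :=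
  witnessAssign pref P I (fun i => if i < n then a (i + 1) else a 0) (n + 1) n

section Expansion

variable {I : Interp S} {q : S.Pred} {hq : S.pArity q = 1}
  {F : S.Func → Option ((ℕ → I.D × ℕ) → I.D)} {skf : ℕ → S.Func} {pref : List Bool}
  {P : Formula S}

theorem fst_skAssign_guardExpansion (harity : ∀ j ∈ exPos pref, S.fArity (skf j) = j + 1)
    (hF : ∀ n ∈ exPos pref, F (skf n) = some (skolemFun pref P I n)) (z : ℕ → I.D × ℕ)
    (n : ℕ) :
    (skAssign (I.guardExpansion q hq F) pref skf z n).1 = witnessAssign pref P I z (n + 1) n := by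
  cases hb : pref.getD n true
  · have hn := mem_exPos.2 hb
    have harity_n := harity n hn
    simp only [skAssign, skSubstSatQ, hb, ite_true,
      Interp.guardExpansion.eval_func_of_eq_some (hF n hn), skolemFun]
    refine congrFun (witnessAssign_congr fun i hi => ?_) n
    rcases Nat.lt_succ_iff_lt_or_eq.1 hi with hin | rfl
    · simp [hin, harity_n, Term.eval]
    · simp [harity_n, Term.eval]
  · rw [skAssign_of_getD_eq_true hb, witnessAssign, Function.update_self, if_pos hb]

theorem skolemMatrixHolds_guardExpansion (hQF : P.isQF)
    (hclosed : ∀ v ∈ P.freeVars, v < pref.length) (hqfresh : q ∉ P.predsIn)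
    (harity : ∀ j ∈ exPos pref, S.fArity (skf j) = j + 1)
    (hF : ∀ n ∈ exPos pref, F (skf n) = some (skolemFun pref P I n))
    (hnone : ∀ g ∈ P.funcsIn, F g = none) {μ₀ : ℕ → I.D}
    (hA : (buildPrenex pref 0 P).val I μ₀ = 1) :
    SkolemMatrixHolds (I.guardExpansion q hq F) q skf pref P := fun z => by
  rw [Interp.guardExpansion.monadicVal_eq, Interp.guardExpansion.val_eq hQF hqfresh hnone]
  refine (guardInf_le_val_witnessAssign hclosed hA z).trans_eq <|
    Formula.val_congr_s11 I P fun v hv => ?_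
  rw [fst_skAssign_guardExpansion harity hF, witnessAssign_of_lt z (hclosed v hv)]

end Expansion

open Classical in
noncomputable def skolemInterp {m : ℕ} (pref : Fin (m + 1) → List Bool)
    (P : Fin (m + 1) → Formula S) (skf : Fin (m + 1) → ℕ → S.Func) (I : Interp S)
    (g : S.Func) : Option ((ℕ → I.D × ℕ) → I.D) :=
  if h : ∃ p : Fin (m + 1) × ℕ, p.2 ∈ exPos (pref p.1) ∧ skf p.1 p.2 = g then
    some (skolemFun (pref h.choose.1) (P h.choose.1) I h.choose.2)
  else none

section SkolemInterp

variable {m : ℕ} {pref : Fin (m + 1) → List Bool} {P : Fin (m + 1) → Formula S}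
  {skf : Fin (m + 1) → ℕ → S.Func}

theorem skolemInterp_skf (I : Interp S)
    (hinj : ∀ i i', ∀ j ∈ exPos (pref i), ∀ j' ∈ exPos (pref i'),
      skf i j = skf i' j' → i = i' ∧ j = j')
    {c : Fin (m + 1)} {n : ℕ} (hn : n ∈ exPos (pref c)) :
    skolemInterp pref P skf I (skf c n) = some (skolemFun (pref c) (P c) I n) := by
  have hex : ∃ p : Fin (m + 1) × ℕ, p.2 ∈ exPos (pref p.1) ∧ skf p.1 p.2 = skf c n :=
    ⟨(c, n), hn, rfl⟩
  obtain ⟨hc, hn'⟩ := hinj _ _ _ hex.choose_spec.1 _ hn hex.choose_spec.2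
  rw [skolemInterp, dif_pos hex, hc, hn']

theorem skolemInterp_eq_none (I : Interp S)
    (hfresh : ∀ i k, ∀ j ∈ exPos (pref i), skf i j ∉ (P k).funcsIn) {c : Fin (m + 1)}
    {g : S.Func} (hg : g ∈ (P c).funcsIn) : skolemInterp pref P skf I g = none :=
  dif_neg fun ⟨_, hp, hpg⟩ => hfresh _ _ _ hp (hpg ▸ hg)

end SkolemInterp

end

/-- SAT-Skolemization, step 1: for closed prenex formulas `A₁,…,Aₘ`
(prefix `pref i`, quantifier-free matrix `P i`) and a fresh monadic predicate symbol `q`,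
the conjunction `A₁ ∧ ⋯ ∧ Aₘ` is 1-satisfiable iff
`∃x q(x) ∧ sk_q(A₁) ∧ ⋯ ∧ sk_q(Aₘ)` is 1-satisfiable; the Skolem function symbols
`skf i j` are fresh (pairwise distinct and not occurring in any matrix) and of the
correct arity. -/
theorem sat_skolemization_step1 (S : Signature) (q : S.Pred) (hq : S.pArity q = 1)
    (m : ℕ) (pref : Fin (m + 1) → List Bool) (P : Fin (m + 1) → Formula S)
    (hQF : ∀ i, (P i).isQF)
    (hclosed : ∀ i, ∀ v ∈ (P i).freeVars, v < (pref i).length)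
    (hqfresh : ∀ i, q ∉ (P i).predsIn)
    (skf : Fin (m + 1) → ℕ → S.Func)
    (harity : ∀ i, ∀ j ∈ exPos (pref i), S.fArity (skf i j) = j + 1)
    (hfresh : ∀ i k, ∀ j ∈ exPos (pref i), skf i j ∉ (P k).funcsIn)
    (hinj : ∀ i i', ∀ j ∈ exPos (pref i), ∀ j' ∈ exPos (pref i'),
      skf i j = skf i' j' → i = i' ∧ j = j') :
    sat1 (bigAnd (buildPrenex (pref 0) 0 (P 0))
        (List.ofFn (fun i : Fin m => buildPrenex (pref i.succ) 0 (P i.succ)))) ↔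
      sat1 (Formula.and (exQ q)
        (bigAnd (skq q (skf 0) (pref 0) (P 0))
          (List.ofFn (fun i : Fin m => skq q (skf i.succ) (pref i.succ) (P i.succ))))) := by
  have hexQ (I : Interp S) μ : (exQ q).val I μ = 1 ↔ ⨆ d, I.monadicVal q d = 1 := Iff.rfl
  have hskq c (I : Interp S) (μ : ℕ → I.D) :=
    val_skq_eq_one_iff (μ := μ) (q := q) (hQF c) (hclosed c) (harity c)
  simp only [sat1, Formula.val_and_eq_one_iff, hexQ,
    val_bigAnd_ofFn_eq_one_iff fun c => buildPrenex (pref c) 0 (P c),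
    val_bigAnd_ofFn_eq_one_iff fun c => skq q (skf c) (pref c) (P c), hskq]
  constructor
  · rintro ⟨I, μ, hA⟩
    refine ⟨I.guardExpansion q hq (skolemInterp pref P skf I), fun _ => Classical.arbitrary _,
      ?_, fun c => ?_⟩
    · rw [Interp.guardExpansion.monadicVal_eq]
      exact iSup_guardValue
    · exact skolemMatrixHolds_guardExpansion (hQF c) (hclosed c) (hqfresh c) (harity c)
        (fun _ hn => skolemInterp_skf I hinj hn) (fun _ hg => skolemInterp_eq_none I hfresh hg)
        (hA c)
  · rintro ⟨I, z, hsup, hsk⟩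
    exact ⟨I, z, fun c =>
      val_buildPrenex_eq_one_of_skolemMatrixHolds hsup (hclosed c) (harity c) (hsk c) z⟩
end
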